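/- arXiv:2512.23770 — 4 statements merged into one kernel-verified Lean document; each statement's English description precedes it below -/
import Mathlib

section
/- Let g_r, g_c, δ_r, δ_c ∈ ℝ^d and ε ∈ ℝ. Assume ⟨g_c, δ_c⟩ ≤ −ε, ⟨g_r, δ_r⟩ ≥ ⟨g_r, δ_c⟩, and ⟨g_c, δ_c⟩ ≤ ⟨g_c, δ_r⟩. Then the safety-biased coefficient μ* lies in [0,1], the combination δ_{μ*} := (1−μ*)·δ_r + μ*·δ_c satisfies ⟨g_c, δ_{μ*}⟩ ≤ −ε, and for every μ ∈ [0,1] with ⟨g_c, δ_μ⟩ ≤ −ε one has ⟨g_r, δ_μ⟩ ≤ ⟨g_r, δ_{μ*}⟩; that is, μ* solves max over μ ∈ [0,1] of ⟨g_r, δ_μ⟩ subject to ⟨g_c, δ_μ⟩ ≤ −ε. -/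
/-!
Along the segment `μ ↦ δ_μ` both objectives are affine in `μ`. The cost `⟨g_c, δ_μ⟩` is
nonincreasing, so the feasible `μ` form a final segment of `[0,1]`, whose left end is `μ*`
(the point where the cost reaches `−ε`, or `0` when `δ_r` is already feasible).
The reward `⟨g_r, δ_μ⟩` is nonincreasing as well, so it is maximal at that left end.
-/

open Matrix

/-- The safety-biased coefficient `μ*` from the SB-TRPO update (cf. eq. (10)):
`μ* := (⟨g_c,δ_r⟩ + ε)/(⟨g_c,δ_r⟩ − ⟨g_c,δ_c⟩)` if
`⟨g_c,δ_c⟩ ≠ ⟨g_c,δ_r⟩` and `⟨g_c,δ_r⟩ ≥ −ε`, and `μ* := 0` otherwise. -/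
noncomputable def mustar {d : ℕ} (gc δr δc : Fin d → ℝ) (ε : ℝ) : ℝ :=
  if gc ⬝ᵥ δc ≠ gc ⬝ᵥ δr ∧ gc ⬝ᵥ δr ≥ -ε then
    (gc ⬝ᵥ δr + ε) / (gc ⬝ᵥ δr - gc ⬝ᵥ δc)
  else 0

section DotProduct

variable {R n : Type*} [CommRing R] [Fintype n]

lemma dotProduct_sub_smul_add_smul (g u v : n → R) (μ : R) :
    g ⬝ᵥ ((1 - μ) • u + μ • v) = (1 - μ) * (g ⬝ᵥ u) + μ * (g ⬝ᵥ v) := by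
  simp only [dotProduct_add, dotProduct_smul, smul_eq_mul]

lemma antitone_dotProduct_sub_smul_add_smul [LinearOrder R] [IsStrictOrderedRing R]
    {g u v : n → R} (h : g ⬝ᵥ v ≤ g ⬝ᵥ u) :
    Antitone fun μ : R => g ⬝ᵥ ((1 - μ) • u + μ • v) := by
  intro μ ν hμν
  simp only [dotProduct_sub_smul_add_smul]
  nlinarith

end DotProduct

section Mustar

variable {d : ℕ} {gc δr δc : Fin d → ℝ} {ε : ℝ}

lemma mustar_mem_Icc (h1 : gc ⬝ᵥ δc ≤ -ε) (h3 : gc ⬝ᵥ δc ≤ gc ⬝ᵥ δr) :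
    mustar gc δr δc ε ∈ Set.Icc (0 : ℝ) 1 := by
  unfold mustar
  split_ifs with h
  · have hpos : 0 < gc ⬝ᵥ δr - gc ⬝ᵥ δc := sub_pos.2 (lt_of_le_of_ne h3 h.1)
    exact ⟨div_nonneg (by linarith [h.2]) hpos.le, (div_le_one hpos).2 (by linarith)⟩
  · exact ⟨le_rfl, zero_le_one⟩

lemma dotProduct_mustar_le (h1 : gc ⬝ᵥ δc ≤ -ε) :
    gc ⬝ᵥ ((1 - mustar gc δr δc ε) • δr + mustar gc δr δc ε • δc) ≤ -ε := by
  rw [dotProduct_sub_smul_add_smul, mustar]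
  split_ifs with h
  · have hne : gc ⬝ᵥ δr - gc ⬝ᵥ δc ≠ 0 := sub_ne_zero.2 (Ne.symm h.1)
    apply le_of_eq
    field_simp
    ring
  · have hr : gc ⬝ᵥ δr ≤ -ε := by
      by_contra! hlt
      exact h ⟨fun heq => by linarith, hlt.le⟩
    simpa using hr

lemma mustar_le_of_dotProduct_le (h3 : gc ⬝ᵥ δc ≤ gc ⬝ᵥ δr) {μ : ℝ} (hμ : 0 ≤ μ)
    (hfeas : gc ⬝ᵥ ((1 - μ) • δr + μ • δc) ≤ -ε) :
    mustar gc δr δc ε ≤ μ := by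
  rw [dotProduct_sub_smul_add_smul] at hfeas
  unfold mustar
  split_ifs with h
  · have hpos : 0 < gc ⬝ᵥ δr - gc ⬝ᵥ δc := sub_pos.2 (lt_of_le_of_ne h3 h.1)
    rw [div_le_iff₀ hpos]
    linarith
  · exact hμ

end Mustar

/-- Under `⟨g_c,δ_c⟩ ≤ −ε`, `⟨g_r,δ_r⟩ ≥ ⟨g_r,δ_c⟩` and
`⟨g_c,δ_c⟩ ≤ ⟨g_c,δ_r⟩`, the safety-biased coefficient `μ*` lies in `[0,1]`,
the corresponding combination satisfies the cost constraint `⟨g_c, δ_{μ*}⟩ ≤ −ε`,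
and `μ*` maximizes `μ ↦ ⟨g_r, δ_μ⟩` over `μ ∈ [0,1]` subject to
`⟨g_c, δ_μ⟩ ≤ −ε`. -/
theorem stmt5 {d : ℕ} (gr gc δr δc : Fin d → ℝ) (ε : ℝ)
    (h1 : gc ⬝ᵥ δc ≤ -ε)
    (h2 : gr ⬝ᵥ δc ≤ gr ⬝ᵥ δr)
    (h3 : gc ⬝ᵥ δc ≤ gc ⬝ᵥ δr) :
    mustar gc δr δc ε ∈ Set.Icc (0:ℝ) 1 ∧
    gc ⬝ᵥ ((1 - mustar gc δr δc ε) • δr + mustar gc δr δc ε • δc) ≤ -ε ∧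
    ∀ μ ∈ Set.Icc (0:ℝ) 1, gc ⬝ᵥ ((1 - μ) • δr + μ • δc) ≤ -ε →
      gr ⬝ᵥ ((1 - μ) • δr + μ • δc) ≤
        gr ⬝ᵥ ((1 - mustar gc δr δc ε) • δr + mustar gc δr δc ε • δc) :=
  ⟨mustar_mem_Icc h1 h3, dotProduct_mustar_le h1, fun _ hμ hfeas =>
    antitone_dotProduct_sub_smul_add_smul h2 (mustar_le_of_dotProduct_le h3 hμ.1 hfeas)⟩
end

section
/- Let F be a symmetric positive definite real d×d matrix, ε_KL > 0, θ ∈ ℝ^d, and let J_r : ℝ^d → ℝ be differentiable with gradient g_r := ∇J_r(θ) ≠ 0 at θ and with ∇J_r Lipschitz on the closed ball of radius ‖δ_r‖ centred at θ, where δ_r ∈ T maximizes δ ↦ ⟨g_r, δ⟩ over T. Suppose the cost gradient g_c := ∇J_c(θ) is zero, so that the SB-TRPO direction equals δ_r. Then ⟨g_r, δ_r⟩ > 0 and there exists α ∈ (0,1] with J_r(θ + α·δ_r) > J_r(θ). -/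
/-!
The trust region is a neighbourhood of `0` (its defining quadratic form is continuous and
vanishes at `0`, below `ε_KL`), so it contains `t • g_r` for small `t > 0`; maximality of `δ_r` gives
`⟪g_r, δ_r⟫ ≥ t ‖g_r‖² > 0`. This is the derivative of `α ↦ J_r (θ + α • δ_r)` at `0`, so the
function exceeds its value at `0` for all small `α > 0`.
-/

open RealInnerProductSpace Filter Topology Set

section TrustRegion

variable {E : Type*} [NormedAddCommGroup E] [InnerProductSpace ℝ E]

def trustRegion (A : E →ₗ[ℝ] E) (ε : ℝ) : Set E :=
  {δ | (1/2) * ⟪δ, A δ⟫ ≤ ε}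

theorem trustRegion_mem_nhds_zero [FiniteDimensional ℝ E] (A : E →ₗ[ℝ] E) {ε : ℝ}
    (hε : 0 < ε) : trustRegion A ε ∈ 𝓝 (0 : E) := by
  have hcont : Continuous fun δ : E => (1/2) * ⟪δ, A δ⟫ := by
    have := A.continuous_of_finiteDimensional
    fun_prop
  exact hcont.continuousAt.preimage_mem_nhds (Iic_mem_nhds (by simpa using hε))

theorem inner_pos_of_forall_inner_le_of_mem_nhds_zero {s : Set E} (hs : s ∈ 𝓝 (0 : E)) {g δ : E}
    (hg : g ≠ 0) (hmax : ∀ x ∈ s, ⟪g, x⟫ ≤ ⟪g, δ⟫) : 0 < ⟪g, δ⟫ := by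
  have hsmul : Tendsto (fun t : ℝ => t • g) (𝓝[>] 0) (𝓝 0) :=
    (Continuous.tendsto' (by fun_prop) 0 0 (zero_smul ℝ g)).mono_left nhdsWithin_le_nhds
  obtain ⟨t, hts, ht⟩ := ((hsmul.eventually_mem hs).and self_mem_nhdsWithin).exists
  calc 0 < t * ‖g‖ ^ 2 := mul_pos ht (by positivity)
    _ = ⟪g, t • g⟫ := by rw [real_inner_smul_right, real_inner_self_eq_norm_sq]
    _ ≤ ⟪g, δ⟫ := hmax _ hts

end TrustRegion

theorem HasDerivAt.eventually_lt_of_pos {f : ℝ → ℝ} {f' x : ℝ} (hf : HasDerivAt f f' x)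
    (hf' : 0 < f') : ∀ᶠ y in 𝓝[>] x, f x < f y := by
  have hslope := (hasDerivAt_iff_tendsto_slope.mp hf).mono_left (nhdsGT_le_nhdsNE x)
  filter_upwards [hslope.eventually (eventually_gt_nhds hf'), self_mem_nhdsWithin]
    with y hy hxy
  exact (slope_pos_iff hxy).mp hy

theorem HasLineDerivAt.exists_mem_Ioc_lt {E : Type*} [AddCommGroup E] [Module ℝ E]
    {f : E → ℝ} {f' : ℝ} {x v : E} (hf : HasLineDerivAt ℝ f f' x v) (hf' : 0 < f') :
    ∃ α ∈ Ioc (0 : ℝ) 1, f x < f (x + α • v) := by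
  obtain ⟨α, hlt, hα⟩ := ((hf.eventually_lt_of_pos hf').and (Ioc_mem_nhdsGT zero_lt_one)).exists
  exact ⟨α, hα, by simpa using hlt⟩

theorem stmt11_general {d : ℕ} (F : Matrix (Fin d) (Fin d) ℝ)
    (εKL : ℝ) (hεKL : 0 < εKL) (θ : EuclideanSpace ℝ (Fin d))
    (Jr : EuclideanSpace ℝ (Fin d) → ℝ) (hJr : Differentiable ℝ Jr)
    (gr : EuclideanSpace ℝ (Fin d)) (hgr : gradient Jr θ = gr) (hgr0 : gr ≠ 0)
    (δr : EuclideanSpace ℝ (Fin d))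
    (hmax : ∀ δ : EuclideanSpace ℝ (Fin d),
      (1/2) * ⟪δ, Matrix.toEuclideanLin F δ⟫ ≤ εKL → ⟪gr, δ⟫ ≤ ⟪gr, δr⟫) :
    0 < ⟪gr, δr⟫ ∧ ∃ α ∈ Set.Ioc (0:ℝ) 1, Jr θ < Jr (θ + α • δr) := by
  have hpos : 0 < ⟪gr, δr⟫ :=
    inner_pos_of_forall_inner_le_of_mem_nhds_zero
      (trustRegion_mem_nhds_zero (Matrix.toEuclideanLin F) hεKL) hgr0 hmax
  have hline : HasLineDerivAt ℝ Jr ⟪gr, δr⟫ θ δr := by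
    subst hgr
    simpa using (hJr θ).hasGradientAt.hasFDerivAt.hasLineDerivAt δr
  exact ⟨hpos, hline.exists_mem_Ioc_lt hpos⟩

/-- reward part of the Performance Improvement theorem, case
`g_c = 0`: with `F` symmetric positive definite, `ε_KL > 0`,
`g_r := ∇J_r(θ) ≠ 0`, `∇J_r` Lipschitz on the closed ball of radius `‖δ_r‖`
around `θ`, `δ_r` a maximizer of `⟨g_r,·⟩` over `T`, and `∇J_c(θ) = 0` (so
the SB-TRPO direction equals `δ_r`), we have `⟨g_r, δ_r⟩ > 0` and there
exists `α ∈ (0,1]` with `J_r(θ + αδ_r) > J_r(θ)`. -/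
theorem stmt11 {d : ℕ} (F : Matrix (Fin d) (Fin d) ℝ) (hF : F.PosDef)
    (εKL : ℝ) (hεKL : 0 < εKL) (θ : EuclideanSpace ℝ (Fin d))
    (Jr Jc : EuclideanSpace ℝ (Fin d) → ℝ) (hJr : Differentiable ℝ Jr)
    (gr : EuclideanSpace ℝ (Fin d)) (hgr : gradient Jr θ = gr) (hgr0 : gr ≠ 0)
    (δr : EuclideanSpace ℝ (Fin d)) (L : NNReal)
    (hLip : LipschitzOnWith L (gradient Jr) (Metric.closedBall θ ‖δr‖))
    (hδr : (1/2) * ⟪δr, Matrix.toEuclideanLin F δr⟫ ≤ εKL)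
    (hmax : ∀ δ : EuclideanSpace ℝ (Fin d),
      (1/2) * ⟪δ, Matrix.toEuclideanLin F δ⟫ ≤ εKL → ⟪gr, δ⟫ ≤ ⟪gr, δr⟫)
    (hgc : gradient Jc θ = 0) :
    0 < ⟪gr, δr⟫ ∧ ∃ α ∈ Set.Ioc (0:ℝ) 1, Jr θ < Jr (θ + α • δr) :=
  stmt11_general F εKL hεKL θ Jr hJr gr hgr hgr0 δr hmax
end

section
/- Let F be a symmetric positive definite real d×d matrix, ε_KL > 0, ε > 0, and g_r, g_c ∈ ℝ^d with g_r ≠ 0. Set a := ⟨g_r, F⁻¹g_r⟩ and b := ⟨g_c, F⁻¹g_r⟩, and suppose √(2ε_KL/a)·b ≤ −ε. Then δ* := √(2ε_KL/a)·F⁻¹g_r is feasible for the SB-TRPO quadratic program, i.e. ⟨g_c, δ*⟩ ≤ −ε and (1/2)⟨δ*, F δ*⟩ ≤ ε_KL, and it is optimal: for every δ ∈ ℝ^d with ⟨g_c, δ⟩ ≤ −ε and (1/2)⟨δ, F δ⟩ ≤ ε_KL one has ⟨g_r, δ⟩ ≤ ⟨g_r, δ*⟩. -/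
/-!
Put `v := F⁻¹ g_r`, so that `⟨g_r, δ⟩ = ⟨v, F δ⟩` and `a = ⟨v, F v⟩`. Cauchy–Schwarz for the
inner product `(x, y) ↦ ⟨x, F y⟩` gives `⟨g_r, δ⟩² ≤ a ⟨δ, F δ⟩ ≤ 2 ε_KL a` on the trust region,
and `⟨g_r, δ*⟩ = √(2 ε_KL / a) · a = √(2 ε_KL a)` attains this bound, while `δ*` itself lies in the
trust region and its cost constraint is exactly the hypothesis.
-/

open Matrix

namespace Matrix

variable {n : Type*}

lemma PosSemidef.isSymm {A : Matrix n n ℝ} (hA : A.PosSemidef) : A.IsSymm :=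
  isHermitian_iff_isSymm.mp hA.isHermitian

variable [Fintype n]

lemma IsSymm.dotProduct_mulVec_comm {R : Type*} [CommSemiring R] {A : Matrix n n R}
    (hA : A.IsSymm) (x y : n → R) : x ⬝ᵥ A *ᵥ y = y ⬝ᵥ A *ᵥ x := by
  rw [dotProduct_mulVec, ← mulVec_transpose, hA.eq, dotProduct_comm]

lemma PosSemidef.dotProduct_mulVec_sq_le {A : Matrix n n ℝ} (hA : A.PosSemidef) (x y : n → ℝ) :
    (x ⬝ᵥ A *ᵥ y) ^ 2 ≤ (x ⬝ᵥ A *ᵥ x) * (y ⬝ᵥ A *ᵥ y) := by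
  have hquad (t : ℝ) :
      0 ≤ (y ⬝ᵥ A *ᵥ y) * (t * t) + (-2 * (x ⬝ᵥ A *ᵥ y)) * t + x ⬝ᵥ A *ᵥ x := by
    have h := hA.dotProduct_mulVec_nonneg (x - t • y)
    rw [star_trivial, mulVec_sub, mulVec_smul, sub_dotProduct, dotProduct_sub, dotProduct_sub,
      smul_dotProduct, dotProduct_smul, dotProduct_smul, hA.isSymm.dotProduct_mulVec_comm y x] at h
    simp only [smul_eq_mul, smul_dotProduct] at h
    linear_combination h
  have h := discrim_le_zero hquad
  rw [discrim] at h
  linarith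

variable [DecidableEq n]

lemma PosDef.mulVec_inv_mulVec {A : Matrix n n ℝ} (hA : A.PosDef) (g : n → ℝ) :
    A *ᵥ A⁻¹ *ᵥ g = g := by
  rw [mulVec_mulVec, mul_nonsing_inv A (A.isUnit_iff_isUnit_det.mp hA.isUnit), one_mulVec]

lemma PosDef.inv_mulVec_dotProduct_mulVec {A : Matrix n n ℝ} (hA : A.PosDef) (g : n → ℝ) :
    A⁻¹ *ᵥ g ⬝ᵥ A *ᵥ A⁻¹ *ᵥ g = g ⬝ᵥ A⁻¹ *ᵥ g := by
  rw [hA.mulVec_inv_mulVec, dotProduct_comm]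

lemma PosDef.dotProduct_sq_le_inv_mul {A : Matrix n n ℝ} (hA : A.PosDef) (g δ : n → ℝ) :
    (g ⬝ᵥ δ) ^ 2 ≤ (g ⬝ᵥ A⁻¹ *ᵥ g) * (δ ⬝ᵥ A *ᵥ δ) := by
  have h := hA.posSemidef.dotProduct_mulVec_sq_le (A⁻¹ *ᵥ g) δ
  rwa [hA.inv_mulVec_dotProduct_mulVec, hA.posSemidef.isSymm.dotProduct_mulVec_comm,
    hA.mulVec_inv_mulVec, dotProduct_comm δ] at h

end Matrix

theorem stmt16_general {d : ℕ} (F : Matrix (Fin d) (Fin d) ℝ) (hF : F.PosDef)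
    (εKL ε : ℝ) (hεKL : 0 < εKL)
    (gr gc : Fin d → ℝ)
    (hb : Real.sqrt (2 * εKL / (gr ⬝ᵥ F⁻¹.mulVec gr)) * (gc ⬝ᵥ F⁻¹.mulVec gr) ≤ -ε) :
    (gc ⬝ᵥ (Real.sqrt (2 * εKL / (gr ⬝ᵥ F⁻¹.mulVec gr)) • F⁻¹.mulVec gr) ≤ -ε ∧
      (1/2) * ((Real.sqrt (2 * εKL / (gr ⬝ᵥ F⁻¹.mulVec gr)) • F⁻¹.mulVec gr) ⬝ᵥ
        F.mulVec (Real.sqrt (2 * εKL / (gr ⬝ᵥ F⁻¹.mulVec gr)) • F⁻¹.mulVec gr)) ≤ εKL) ∧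
    ∀ δ : Fin d → ℝ, gc ⬝ᵥ δ ≤ -ε → (1/2) * (δ ⬝ᵥ F.mulVec δ) ≤ εKL →
      gr ⬝ᵥ δ ≤ gr ⬝ᵥ (Real.sqrt (2 * εKL / (gr ⬝ᵥ F⁻¹.mulVec gr)) • F⁻¹.mulVec gr) := by
  set a := gr ⬝ᵥ F⁻¹ *ᵥ gr
  set s := √(2 * εKL / a)
  have ha : 0 ≤ a := by simpa using hF.posSemidef.inv.dotProduct_mulVec_nonneg gr
  have hs : s ^ 2 = 2 * εKL / a := Real.sq_sqrt (by positivity)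
  refine ⟨⟨by rwa [dotProduct_smul, smul_eq_mul], ?_⟩, fun δ _ hδ => ?_⟩
  · have h : 2 * εKL / a * a ≤ 2 * εKL := by
      rw [mul_comm_div]
      exact mul_le_of_le_one_right (by positivity) (div_self_le_one a)
    have hq : s • F⁻¹ *ᵥ gr ⬝ᵥ F *ᵥ (s • F⁻¹ *ᵥ gr) = s ^ 2 * a := by
      rw [mulVec_smul, dotProduct_smul, smul_dotProduct, hF.inv_mulVec_dotProduct_mulVec,
        smul_eq_mul, smul_eq_mul]
      ring
    rw [hq, hs]
    linarith
  · have h : (gr ⬝ᵥ δ) ^ 2 ≤ (s * a) ^ 2 := calc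
      (gr ⬝ᵥ δ) ^ 2 ≤ a * (δ ⬝ᵥ F *ᵥ δ) := hF.dotProduct_sq_le_inv_mul gr δ
      _ ≤ a * (2 * εKL) := by gcongr; linarith
      _ = (s * a) ^ 2 := by rw [mul_pow, hs, sq, mul_comm_div, mul_self_div_self, mul_comm]
    rw [dotProduct_smul, smul_eq_mul]
    exact (abs_le_of_sq_le_sq' h (by positivity)).2

/-- case `λ = 0` of the exact SB-TRPO solution: if
`√(2ε_KL/a)·b ≤ −ε` with `a := ⟨g_r,F⁻¹g_r⟩` and `b := ⟨g_c,F⁻¹g_r⟩`, then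
`δ* := √(2ε_KL/a)·F⁻¹g_r` is feasible for the SB-TRPO quadratic program and
optimal for it. -/
theorem stmt16 {d : ℕ} (F : Matrix (Fin d) (Fin d) ℝ) (hF : F.PosDef)
    (εKL ε : ℝ) (hεKL : 0 < εKL) (hε : 0 < ε)
    (gr gc : Fin d → ℝ) (hgr : gr ≠ 0)
    (hb : Real.sqrt (2 * εKL / (gr ⬝ᵥ F⁻¹.mulVec gr)) * (gc ⬝ᵥ F⁻¹.mulVec gr) ≤ -ε) :
    (gc ⬝ᵥ (Real.sqrt (2 * εKL / (gr ⬝ᵥ F⁻¹.mulVec gr)) • F⁻¹.mulVec gr) ≤ -ε ∧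
      (1/2) * ((Real.sqrt (2 * εKL / (gr ⬝ᵥ F⁻¹.mulVec gr)) • F⁻¹.mulVec gr) ⬝ᵥ
        F.mulVec (Real.sqrt (2 * εKL / (gr ⬝ᵥ F⁻¹.mulVec gr)) • F⁻¹.mulVec gr)) ≤ εKL) ∧
    ∀ δ : Fin d → ℝ, gc ⬝ᵥ δ ≤ -ε → (1/2) * (δ ⬝ᵥ F.mulVec δ) ≤ εKL →
      gr ⬝ᵥ δ ≤ gr ⬝ᵥ (Real.sqrt (2 * εKL / (gr ⬝ᵥ F⁻¹.mulVec gr)) • F⁻¹.mulVec gr) :=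
  stmt16_general F hF εKL ε hεKL gr gc hb
end

section
/- Let Π be a set, J_r, J_c : Π → ℝ, D : Π → Π → ℝ with D(π,π) = 0 for all π, ε_KL ≥ 0, and β ∈ (0,1]. Let (π_k) be a sequence in Π such that for every k there is a real number c*_k with: (i) c*_k = J_c(σ) for some σ with D(π_k, σ) ≤ ε_KL, and c*_k ≤ J_c(π) for every π with D(π_k, π) ≤ ε_KL; and, setting ε_k := β·(J_c(π_k) − c*_k), (ii) D(π_k, π_{k+1}) ≤ ε_KL, J_c(π_{k+1}) ≤ J_c(π_k) − ε_k, and J_r(π) ≤ J_r(π_{k+1}) for every π with D(π_k, π) ≤ ε_KL and J_c(π) ≤ J_c(π_k) − ε_k. Suppose for some index K both J_c(π_{K+1}) = J_c(π_K) and J_r(π_{K+1}) = J_r(π_K). Then π_K is a trust-region local optimum of both cost and the modified constrained problem: J_c(π_K) = c*_K, i.e. J_c(π_K) ≤ J_c(π) for every π with D(π_K, π) ≤ ε_KL; and J_r(π_K) ≥ J_r(π) for every π with D(π_K, π) ≤ ε_KL and J_c(π) ≤ c*_K. -/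
theorem stmt19_general {P : Type*} (Jr Jc : P → ℝ) (D : P → P → ℝ)
    (hD : ∀ π : P, D π π = 0) (εKL : ℝ) (hεKL : 0 ≤ εKL)
    (β : ℝ) (hβ0 : 0 < β)
    (pi : ℕ → P) (cstar : ℕ → ℝ)
    (hlb : ∀ k : ℕ, ∀ π : P, D (pi k) π ≤ εKL → cstar k ≤ Jc π)
    (hcost : ∀ k : ℕ, Jc (pi (k + 1)) ≤ Jc (pi k) - β * (Jc (pi k) - cstar k))
    (hmax : ∀ k : ℕ, ∀ π : P, D (pi k) π ≤ εKL →
      Jc π ≤ Jc (pi k) - β * (Jc (pi k) - cstar k) → Jr π ≤ Jr (pi (k + 1)))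
    (K : ℕ)
    (hcK : Jc (pi (K + 1)) = Jc (pi K))
    (hrK : Jr (pi (K + 1)) = Jr (pi K)) :
    Jc (pi K) = cstar K ∧
    (∀ π : P, D (pi K) π ≤ εKL → Jc (pi K) ≤ Jc π) ∧
    (∀ π : P, D (pi K) π ≤ εKL → Jc π ≤ cstar K → Jr π ≤ Jr (pi K)) := by
  have hself : D (pi K) (pi K) ≤ εKL := (hD (pi K)).symm ▸ hεKL
  -- a stalled cost step forces `β * (Jc (pi K) - cstar K) ≤ 0`
  have hstall : Jc (pi K) ≤ cstar K := by
    have hdec : β * (Jc (pi K) - cstar K) ≤ 0 := by linarith [hcost K]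
    linarith [nonpos_of_mul_nonpos_right hdec hβ0]
  have hopt : Jc (pi K) = cstar K := le_antisymm hstall (hlb K (pi K) hself)
  have hnodec : Jc (pi K) - β * (Jc (pi K) - cstar K) = cstar K := by
    rw [hopt, sub_self, mul_zero, sub_zero]
  refine ⟨hopt, fun π hπ => hopt ▸ hlb K π hπ, fun π hπ hc => ?_⟩
  exact hrK ▸ hmax K π hπ (hnodec.symm ▸ hc)

/-- Lemma on the idealised SB-TRPO update, part 3: under the
same setup as Statement 18, if for some index `K` neither cost nor reward
changes (`J_c(π_{K+1}) = J_c(π_K)` and `J_r(π_{K+1}) = J_r(π_K)`), then `π_K`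
is a trust-region local optimum of both cost and the modified constrained
problem: `J_c(π_K) = c*_K`, i.e. `J_c(π_K) ≤ J_c(π)` for all `π` in the trust
region around `π_K`; and `J_r(π_K) ≥ J_r(π)` for all `π` in the trust region
around `π_K` with `J_c(π) ≤ c*_K`. -/
theorem stmt19 {P : Type*} (Jr Jc : P → ℝ) (D : P → P → ℝ)
    (hD : ∀ π : P, D π π = 0) (εKL : ℝ) (hεKL : 0 ≤ εKL)
    (β : ℝ) (hβ0 : 0 < β) (hβ1 : β ≤ 1)
    (pi : ℕ → P) (cstar : ℕ → ℝ)
    (hattain : ∀ k : ℕ, ∃ σ : P, D (pi k) σ ≤ εKL ∧ cstar k = Jc σ)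
    (hlb : ∀ k : ℕ, ∀ π : P, D (pi k) π ≤ εKL → cstar k ≤ Jc π)
    (htr : ∀ k : ℕ, D (pi k) (pi (k + 1)) ≤ εKL)
    (hcost : ∀ k : ℕ, Jc (pi (k + 1)) ≤ Jc (pi k) - β * (Jc (pi k) - cstar k))
    (hmax : ∀ k : ℕ, ∀ π : P, D (pi k) π ≤ εKL →
      Jc π ≤ Jc (pi k) - β * (Jc (pi k) - cstar k) → Jr π ≤ Jr (pi (k + 1)))
    (K : ℕ)
    (hcK : Jc (pi (K + 1)) = Jc (pi K))
    (hrK : Jr (pi (K + 1)) = Jr (pi K)) :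
    Jc (pi K) = cstar K ∧
    (∀ π : P, D (pi K) π ≤ εKL → Jc (pi K) ≤ Jc π) ∧
    (∀ π : P, D (pi K) π ≤ εKL → Jc π ≤ cstar K → Jr π ≤ Jr (pi K)) :=
  stmt19_general Jr Jc D hD εKL hεKL β hβ0 pi cstar hlb hcost hmax K hcK hrK
end
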